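/- arXiv:1809.10713 — 3 statements merged into one kernel-verified Lean document; each statement's English description precedes it below -/
import Mathlib

section
/- Let R be a semiprime ring, σ an automorphism of R, and δ a σ-derivation of R such that δ∘σ = c·(σ∘δ) for some unit scalar c. If L is a nonzero left ideal of R with δ(L) = 0, then δ(L·R) = 0 and L·R is a nonzero two-sided ideal of R contained in the kernel of δ. -/
/-- A ring is semiprime if it has no nonzero nilpotent ideals; elementwise,
`a R a = 0` implies `a = 0`. -/
def IsSemiprimeRing' (R : Type*) [Ring R] : Prop :=
  ∀ a : R, (∀ r : R, a * r * a = 0) → a = 0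

/-- Let `R` be a semiprime ring, `σ` an automorphism and `δ` a `σ`-derivation with
`σ ∘ δ = λ • (δ ∘ σ)`.  If `L` is a nonzero left ideal of `R` with `δ(L) = 0`, then
`δ(L·R) = 0` and `L·R` is a nonzero two-sided ideal of `R` contained in `ker δ`. -/
theorem ideal_mul_ring_stable_of_skewDeriv_vanishes
    {k R : Type*} [Field k] [Ring R] [Algebra k R]
    (hsp : IsSemiprimeRing' R)
    (σ : R ≃ₐ[k] R) (δ : R →ₗ[k] R) (lam : kˣ)
    (hLeib : ∀ r s : R, δ (r * s) = σ r * δ s + δ r * s)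
    (hcomm : ∀ r : R, σ (δ r) = (lam : k) • δ (σ r))
    (L : Ideal R) (hL : L ≠ ⊥)
    (hδL : ∀ a ∈ L, δ a = 0) :
    (∀ a ∈ L, ∀ r : R, δ (a * r) = 0) ∧
      (Ideal.span {x : R | ∃ a ∈ L, ∃ r : R, x = a * r} ≠ ⊥) ∧
      (∀ x ∈ Ideal.span {x : R | ∃ a ∈ L, ∃ r : R, x = a * r}, ∀ s : R,
        x * s ∈ Ideal.span {x : R | ∃ a ∈ L, ∃ r : R, x = a * r}) ∧
      (∀ x ∈ Ideal.span {x : R | ∃ a ∈ L, ∃ r : R, x = a * r}, δ x = 0) := by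
  -- Step 1: δ(s) * b = 0 for all s ∈ R, b ∈ L.
  have h1 : ∀ s : R, ∀ b ∈ L, δ s * b = 0 := by
    intro s b hb
    have h := hLeib s b
    rw [hδL b hb, hδL (s * b) (L.mul_mem_left s hb), mul_zero, zero_add] at h
    exact h.symm
  -- Step 2: δ(u) * σ(b) = 0 for all u ∈ R, b ∈ L.
  have h2 : ∀ u : R, ∀ b ∈ L, δ u * σ b = 0 := by
    intro u b hb
    have h := congrArg σ (h1 (σ.symm u) b hb)
    rw [map_mul, map_zero, hcomm, σ.apply_symm_apply, smul_mul_assoc] at h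
    have := smul_eq_zero.mp h
    rcases this with h' | h'
    · exact absurd h' lam.ne_zero
    · exact h'
  -- Step 3: δ(a * r) = 0 for a ∈ L.
  have h3 : ∀ a ∈ L, ∀ r : R, δ (a * r) = 0 := by
    intro a ha r
    have ht : σ a * δ r = 0 := by
      apply hsp
      intro r'
      have hmem : σ.symm r' * a ∈ L := L.mul_mem_left _ ha
      have : δ r * σ (σ.symm r' * a) = 0 := h2 r _ hmem
      rw [map_mul, σ.apply_symm_apply] at this
      calc σ a * δ r * r' * (σ a * δ r)
          = σ a * (δ r * (r' * σ a) * δ r) := by simp only [mul_assoc]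
        _ = 0 := by rw [this, zero_mul, mul_zero]
    rw [hLeib, hδL a ha, ht, zero_mul, add_zero]
  refine ⟨h3, ?_, ?_, ?_⟩
  · -- nonzero
    obtain ⟨a, ha, hane⟩ := Submodule.exists_mem_ne_zero_of_ne_bot hL
    intro hbot
    apply hane
    have hmem : a ∈ Ideal.span {x : R | ∃ a ∈ L, ∃ r : R, x = a * r} :=
      Ideal.subset_span ⟨a, ha, 1, (mul_one a).symm⟩
    rw [hbot] at hmem
    exact hmem
  · -- right stable
    intro x hx s
    induction hx using Submodule.span_induction with
    | mem y hy =>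
      obtain ⟨a, ha, r, rfl⟩ := hy
      exact Ideal.subset_span ⟨a, ha, r * s, mul_assoc a r s⟩
    | zero => simp only [zero_mul]; exact (Ideal.span _).zero_mem
    | add y z _ _ hy hz => rw [add_mul]; exact (Ideal.span _).add_mem hy hz
    | smul c y _ hy =>
      rw [smul_eq_mul, mul_assoc]
      exact (Ideal.span _).smul_mem c hy
  · -- δ vanishes
    intro x hx
    have key : ∀ c : R, δ (c * x) = 0 := by
      induction hx using Submodule.span_induction with
      | mem y hy =>
        intro c
        obtain ⟨a, ha, r, rfl⟩ := hy
        rw [← mul_assoc]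
        exact h3 _ (L.mul_mem_left c ha) r
      | zero => intro c; rw [mul_zero, map_zero]
      | add y z _ _ hy hz => intro c; rw [mul_add, map_add, hy, hz, add_zero]
      | smul c' y _ hy => intro c; rw [smul_eq_mul, ← mul_assoc]; exact hy (c * c')
    have := key 1
    rwa [one_mul] at this
end

section
/- Let B be the bosonization of a quantum linear space B(G, g₁,…,g_θ, χ₁,…,χ_θ) over an algebraically closed field k of characteristic zero, with m_i = ord(χ_i(g_i)). Set x̄ = x₁^{m₁-1}⋯x_θ^{m_θ-1} and t₀ = e₀·x̄ where e₀ = (1/|G|)Σ_{g∈G} g. Then t₀ is a left integral of B: h·t₀ = ε(h)·t₀ for all h ∈ B. In particular g·t₀ = t₀ for all g ∈ G and x_i·t₀ = 0 for all i. -/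
open Finset

/-- In a bosonization `B = B(G, ḡ, χ̄)` of a quantum linear space, the element
`t₀ = e₀ · x̄ = (1/|G|)(∑_{g} g) · x₁^{m₁-1} ⋯ x_θ^{m_θ-1}` is a left integral:
`h · t₀ = ε(h) t₀` for all `h ∈ B`; in particular `g · t₀ = t₀` and `x_i · t₀ = 0`. -/
theorem qls_t0_is_left_integral
    {k : Type*} [Field k] [IsAlgClosed k] [CharZero k]
    {G : Type*} [CommGroup G] [Fintype G]
    {B : Type*} [Ring B] [Algebra k B]
    (θ : ℕ) (g : Fin θ → G) (χ : Fin θ → (G →* kˣ)) (m : Fin θ → ℕ)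
    (hm : ∀ i, m i = orderOf (χ i (g i))) (hm2 : ∀ i, 2 ≤ m i)
    -- the grouplike generators
    (φ : G →* B)
    -- the skew-primitive generators
    (x : Fin θ → B)
    -- the defining relations of B(G, ḡ, χ̄)
    (hgx : ∀ (h : G) (i : Fin θ), φ h * x i = (χ i h : k) • (x i * φ h))
    (hxm : ∀ i : Fin θ, x i ^ (m i) = 0)
    (hxx : ∀ i j : Fin θ, i ≠ j → x i * x j = (χ j (g i) : k) • (x j * x i))
    -- B is generated by the grouplikes and the skew primitives
    (hgen : Algebra.adjoin k (Set.range φ ∪ Set.range x) = ⊤)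
    -- the counit of B
    (ε : B →ₐ[k] k) (hεφ : ∀ h : G, ε (φ h) = 1) (hεx : ∀ i : Fin θ, ε (x i) = 0) :
    -- with `x̄ = ∏ᵢ xᵢ^(mᵢ-1)` and `t₀ = e₀ x̄`, `t₀` is a left integral of `B`
    ∀ h : B,
      h * (((Fintype.card G : k)⁻¹ • ∑ a : G, φ a) *
            (List.ofFn (fun i : Fin θ => x i ^ (m i - 1))).prod)
        = ε h • (((Fintype.card G : k)⁻¹ • ∑ a : G, φ a) *
            (List.ofFn (fun i : Fin θ => x i ^ (m i - 1))).prod) := by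
  set e₀ : B := (Fintype.card G : k)⁻¹ • ∑ a : G, φ a with he₀
  set xb : B := (List.ofFn (fun i : Fin θ => x i ^ (m i - 1))).prod with hxb
  -- commutation of x i with powers of x j
  have hpow : ∀ (i j : Fin θ), i ≠ j → ∀ n : ℕ,
      x i * x j ^ n = ((χ j (g i) : k) ^ n) • (x j ^ n * x i) := by
    intro i j hij n
    induction n with
    | zero => simp
    | succ n ih =>
      rw [pow_succ, ← mul_assoc, ih, smul_mul_assoc, mul_assoc, hxx i j hij,
        mul_smul_comm, smul_smul, ← mul_assoc, ← pow_succ, ← pow_succ]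
  -- x i annihilates any product containing x i ^ (m i - 1)
  have hzero : ∀ (i : Fin θ) (l : List (Fin θ)), i ∈ l →
      x i * (l.map fun j => x j ^ (m j - 1)).prod = 0 := by
    intro i l
    induction l with
    | nil => simp
    | cons j rest ih =>
      intro hmem
      rw [List.map_cons, List.prod_cons, ← mul_assoc]
      by_cases hij : i = j
      · subst hij
        have h2 := hm2 i
        have hmi : m i - 1 + 1 = m i := by omega
        rw [← pow_succ', hmi, hxm, zero_mul]
      · have hi : i ∈ rest := by
          rcases List.mem_cons.mp hmem with h | h
          · exact absurd h hij
          · exact h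
        rw [hpow i j hij, smul_mul_assoc, mul_assoc, ih hi, mul_zero, smul_zero]
  have hx0 : ∀ i : Fin θ, x i * xb = 0 := by
    intro i
    rw [hxb, List.ofFn_eq_map]
    exact hzero i (List.finRange θ) (List.mem_finRange i)
  -- grouplikes fix t₀
  have hφt : ∀ h : G, φ h * (e₀ * xb) = e₀ * xb := by
    intro h
    rw [← mul_assoc]
    congr 1
    rw [he₀, mul_smul_comm, Finset.mul_sum]
    congr 1
    simp_rw [← map_mul]
    exact Equiv.sum_comp (Equiv.mulLeft h) φ
  -- skew primitives kill t₀
  have hxt : ∀ i : Fin θ, x i * (e₀ * xb) = 0 := by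
    intro i
    have hxφ : ∀ a : G, x i * (φ a * xb) = 0 := by
      intro a
      have hc : (χ i a : k) ≠ 0 := Units.ne_zero _
      have hcomm : x i * φ a = ((χ i a : k))⁻¹ • (φ a * x i) := by
        rw [hgx a i, smul_smul, inv_mul_cancel₀ hc, one_smul]
      rw [← mul_assoc, hcomm, smul_mul_assoc, mul_assoc, hx0 i, mul_zero, smul_zero]
    rw [he₀, smul_mul_assoc, Finset.sum_mul, mul_smul_comm, Finset.mul_sum]
    simp only [hxφ, Finset.sum_const_zero, smul_zero]
  -- the set of h satisfying the integral identity is a subalgebra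
  let S : Subalgebra k B :=
    { carrier := {h : B | h * (e₀ * xb) = ε h • (e₀ * xb)}
      mul_mem' := by
        intro a b ha hb
        simp only [Set.mem_setOf_eq] at ha hb ⊢
        rw [map_mul, mul_assoc, hb, mul_smul_comm, ha, smul_smul, mul_comm (ε b) (ε a)]
      add_mem' := by
        intro a b ha hb
        simp only [Set.mem_setOf_eq] at ha hb ⊢
        rw [add_mul, ha, hb, map_add, add_smul]
      one_mem' := by
        simp only [Set.mem_setOf_eq]
        rw [one_mul, map_one, one_smul]
      zero_mem' := by
        simp only [Set.mem_setOf_eq]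
        rw [zero_mul, map_zero, zero_smul]
      algebraMap_mem' := fun c => by
        simp only [Set.mem_setOf_eq]
        rw [← Algebra.smul_def]
        congr 1
        simp }
  have hsub : Set.range φ ∪ Set.range x ⊆ (S : Set B) := by
    rintro y (⟨h, rfl⟩ | ⟨i, rfl⟩)
    · show φ h * (e₀ * xb) = ε (φ h) • (e₀ * xb)
      rw [hφt h, hεφ h, one_smul]
    · show x i * (e₀ * xb) = ε (x i) • (e₀ * xb)
      rw [hxt i, hεx i, zero_smul]
  intro h
  have hmem : h ∈ S := by
    have : Algebra.adjoin k (Set.range φ ∪ Set.range x) ≤ S := Algebra.adjoin_le hsub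
    exact this (hgen ▸ Algebra.mem_top)
  exact hmem
end

section
/- Let R be a B-module algebra for a QLS B, where x acts as a σ-derivation with respect to the automorphism given by grouplike g, with relation g x = λ x g, λ a primitive m-th root of unity. If x^t(L) = 0 for a g-stable left ideal L with t minimal and 2 ≤ t < m, then for all a, b ∈ L: x^t(x^{t-2}(a)·b) = [t]_λ · g^{t-1}(x^{t-1}(a)) · x^{t-1}(b), where [t]_λ = 1 + λ + ⋯ + λ^{t-1}. Consequently g^{t-1}(x^{t-1}(a))·x^{t-1}(b) = 0 and (x^{t-1}(L))² = 0. -/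
open Finset

/-- Let `σ` be an automorphism of `R` and `δ` a `σ`-derivation with `σδ = λδσ`, `λ` a
primitive `m`-th root of unity.  If `L` is a `σ`-stable left ideal with `δ^t(L) = 0`,
`t` minimal and `2 ≤ t < m`, then for all `a, b ∈ L`:
`δ^t(δ^{t-2}(a)·b) = [t]_λ · σ^{t-1}(δ^{t-1}(a)) · δ^{t-1}(b)`; consequently
`σ^{t-1}(δ^{t-1}(a)) · δ^{t-1}(b) = 0` and `(δ^{t-1}(L))² = 0`. -/
theorem taft_skewDeriv_power_vanishing
    {k R : Type*} [Field k] [Ring R] [Algebra k R]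
    (σ : R ≃ₐ[k] R) (δ : R →ₗ[k] R) (lam : k) (m : ℕ) (hm : 2 ≤ m)
    (hlam : IsPrimitiveRoot lam m)
    (hLeib : ∀ r s : R, δ (r * s) = σ r * δ s + δ r * s)
    (hcomm : ∀ r : R, σ (δ r) = lam • δ (σ r))
    (L : Ideal R) (hσL : ∀ a ∈ L, σ a ∈ L)
    (t : ℕ) (ht2 : 2 ≤ t) (htm : t < m)
    (hδt : ∀ a ∈ L, (⇑δ)^[t] a = 0)
    (hmin : ∃ a ∈ L, (⇑δ)^[t - 1] a ≠ 0) :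
    ∀ a ∈ L, ∀ b ∈ L,
      ((⇑δ)^[t] ((⇑δ)^[t - 2] a * b)
          = (∑ i ∈ range t, lam ^ i) •
              ((⇑σ)^[t - 1] ((⇑δ)^[t - 1] a) * (⇑δ)^[t - 1] b)) ∧
        (⇑σ)^[t - 1] ((⇑δ)^[t - 1] a) * (⇑δ)^[t - 1] b = 0 ∧
        (⇑δ)^[t - 1] a * (⇑δ)^[t - 1] b = 0 := by
  intro a ha b hb
  have hm0 : m ≠ 0 := by omega
  have hlam0 : lam ≠ 0 := hlam.ne_zero hm0
  have hlam1 : lam ≠ 1 := hlam.ne_one (by omega)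
  have hlamt : lam ^ t ≠ 1 := hlam.pow_ne_one_of_pos_of_lt (by omega) htm
  -- helpers for iterates of σ and σ.symm
  have hσsmul : ∀ (j : ℕ) (c : k) (r : R), (⇑σ)^[j] (c • r) = c • (⇑σ)^[j] r := by
    intro j
    induction j with
    | zero => simp
    | succ j ih =>
        intro c r
        rw [Function.iterate_succ_apply (⇑σ), map_smul, ih,
          ← Function.iterate_succ_apply (⇑σ) j r]
  have hσ0 : ∀ j : ℕ, (⇑σ)^[j] (0 : R) = 0 := by
    intro j
    induction j with
    | zero => rfl
    | succ j ih => rw [Function.iterate_succ_apply (⇑σ), map_zero, ih]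
  have hσs0 : ∀ j : ℕ, (⇑σ.symm)^[j] (0 : R) = 0 := by
    intro j
    induction j with
    | zero => rfl
    | succ j ih => rw [Function.iterate_succ_apply (⇑σ.symm), map_zero, ih]
  -- commutation of δ with iterates of σ and σ.symm
  have hδσ : ∀ r : R, δ (σ r) = lam⁻¹ • σ (δ r) := by
    intro r
    rw [hcomm r, smul_smul, inv_mul_cancel₀ hlam0, one_smul]
  have hδσn : ∀ (j : ℕ) (r : R), δ ((⇑σ)^[j] r) = (lam⁻¹) ^ j • (⇑σ)^[j] (δ r) := by
    intro j
    induction j with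
    | zero => simp
    | succ j ih =>
        intro r
        rw [Function.iterate_succ_apply' (⇑σ) j r, hδσ, ih, map_smul, smul_smul,
          ← Function.iterate_succ_apply' (⇑σ) j (δ r), ← pow_succ']
  have hδsymm : ∀ r : R, δ (σ.symm r) = lam • σ.symm (δ r) := by
    intro r
    have h := hcomm (σ.symm r)
    rw [σ.apply_symm_apply] at h
    have h2 := congrArg σ.symm h
    rw [σ.symm_apply_apply, map_smul] at h2
    exact h2
  have hδsymmn : ∀ (j : ℕ) (r : R),
      δ ((⇑σ.symm)^[j] r) = lam ^ j • (⇑σ.symm)^[j] (δ r) := by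
    intro j
    induction j with
    | zero => simp
    | succ j ih =>
        intro r
        rw [Function.iterate_succ_apply' (⇑σ.symm) j r, hδsymm, ih, map_smul, smul_smul,
          ← Function.iterate_succ_apply' (⇑σ.symm) j (δ r), ← pow_succ']
  have hσsymmσ : ∀ (j : ℕ) (r : R), (⇑σ)^[j] ((⇑σ.symm)^[j] r) = r := by
    intro j
    induction j with
    | zero => simp
    | succ j ih =>
        intro r
        rw [Function.iterate_succ_apply (⇑σ), Function.iterate_succ_apply' (⇑σ.symm),
          σ.apply_symm_apply, ih]
  -- the key q-Leibniz formula for u with δ²u = 0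
  have key : ∀ u v : R, δ (δ u) = 0 → ∀ n : ℕ,
      (⇑δ)^[n + 1] (u * v) = (⇑σ)^[n + 1] u * (⇑δ)^[n + 1] v
        + (∑ i ∈ range (n + 1), (lam⁻¹) ^ i) • ((⇑σ)^[n] (δ u) * (⇑δ)^[n] v) := by
    intro u v hu n
    induction n with
    | zero => simp [hLeib, add_comm]
    | succ n ih =>
        have e1 : δ ((⇑σ)^[n] (δ u)) = 0 := by
          rw [hδσn, hu, hσ0, smul_zero]
        rw [Function.iterate_succ_apply' (⇑δ) (n + 1), ih, map_add, map_smul,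
          hLeib, hLeib, hδσn (n + 1) u, e1, zero_mul, add_zero,
          ← Function.iterate_succ_apply' (⇑σ) (n + 1) u,
          ← Function.iterate_succ_apply' (⇑δ) (n + 1) v,
          ← Function.iterate_succ_apply' (⇑σ) n (δ u),
          ← Function.iterate_succ_apply' (⇑δ) n v,
          sum_range_succ _ (n + 1), add_smul, smul_mul_assoc]
        abel
  -- the q-integer is nonzero
  have hq1 : lam⁻¹ ≠ 1 := by
    simpa [inv_eq_one] using hlam1
  have hqt : (lam⁻¹) ^ t ≠ 1 := by
    rw [inv_pow]
    exact fun h => hlamt (inv_eq_one.mp h)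
  have cne : (∑ i ∈ range t, (lam⁻¹) ^ i) ≠ 0 := by
    rw [geom_sum_eq hq1]
    exact div_ne_zero (sub_ne_zero.mpr hqt) (sub_ne_zero.mpr hq1)
  obtain ⟨s, rfl⟩ : ∃ s, t = s + 2 := ⟨t - 2, by omega⟩
  have hs1 : s + 2 - 1 = s + 1 := rfl
  have hs2 : s + 2 - 2 = s := rfl
  rw [hs1, hs2]
  -- main vanishing: for any u with δ²u = 0, σ^[t-1](δu) · δ^[t-1]b = 0
  have hzero : ∀ u : R, δ (δ u) = 0 → (⇑σ)^[s + 1] (δ u) * (⇑δ)^[s + 1] b = 0 := by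
    intro u hu
    have h1 := key u b hu (s + 1)
    have h2 : (⇑δ)^[s + 2] (u * b) = 0 := hδt _ (Ideal.mul_mem_left L u hb)
    have h3 : (⇑δ)^[s + 2] b = 0 := hδt b hb
    rw [h2, h3, mul_zero, zero_add] at h1
    rcases smul_eq_zero.mp h1.symm with h | h
    · exact absurd h cne
    · exact h
  -- derivative facts about δ^[s] a
  have hda : δ ((⇑δ)^[s] a) = (⇑δ)^[s + 1] a :=
    (Function.iterate_succ_apply' (⇑δ) s a).symm
  have hdda : δ (δ ((⇑δ)^[s] a)) = 0 := by
    rw [hda, ← Function.iterate_succ_apply' (⇑δ) (s + 1) a]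
    exact hδt a ha
  -- Claim 2
  have claim2 : (⇑σ)^[s + 1] ((⇑δ)^[s + 1] a) * (⇑δ)^[s + 1] b = 0 := by
    have h := hzero ((⇑δ)^[s] a) hdda
    rwa [hda] at h
  -- Claim 3
  have claim3 : (⇑δ)^[s + 1] a * (⇑δ)^[s + 1] b = 0 := by
    set u := (⇑σ.symm)^[s + 1] ((⇑δ)^[s] a) with hu_def
    have hdu : δ u = lam ^ (s + 1) • (⇑σ.symm)^[s + 1] ((⇑δ)^[s + 1] a) := by
      rw [hu_def, hδsymmn, hda]
    have hddu : δ (δ u) = 0 := by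
      rw [hdu, map_smul, hδsymmn, ← Function.iterate_succ_apply' (⇑δ) (s + 1) a,
        hδt a ha, hσs0, smul_zero, smul_zero]
    have h := hzero u hddu
    rw [hdu, hσsmul, hσsymmσ, smul_mul_assoc] at h
    rcases smul_eq_zero.mp h with h' | h'
    · exact absurd h' (pow_ne_zero _ hlam0)
    · exact h'
  -- Claim 1
  refine ⟨?_, claim2, claim3⟩
  rw [claim2, smul_zero]
  exact hδt _ (Ideal.mul_mem_left L _ hb)
end
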